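/- arXiv:2504.08435 — 2 statements merged into one kernel-verified Lean document; each statement's English description precedes it below -/
import Mathlib

section
/- Let X be a real random variable with mean μ, and suppose E|X - μ|^m = σ_m^m < ∞ for some m ≥ 2. Let 0 < ε < 1/2 and let α = Q_{ε}(X), β = Q_{1-ε}(X) be the ε and (1-ε) quantiles of X. Then |E φ_{α,β}(X) - μ| ≤ 4 σ_m ε^{1 - 1/m}, where φ_{α,β}(x) = max(α, min(x, β)). -/
/-!
Write `max α (min x β) = x + (α - x)⁺ - (x - β)⁺`, so that `E φ(X) - μ` is a difference of two
nonnegative numbers and it suffices to bound each of them. Put `t = σ_m ε^(-1/m)`. Markov's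
inequality for `|X - μ|^m` places both quantiles within `t` of `μ`, and the definition of the
quantiles gives `P(X < α) ≤ ε` and `P(X > β) ≤ ε`. On `{X < α}` we have
`α - X ≤ t + |X - μ| ≤ 2t + |X - μ|^m / t^(m-1)`, hence `E(α - X)⁺ ≤ 2tε + σ_m^m / t^(m-1) = 3εt`,
and symmetrically for `E(X - β)⁺`. The argument needs `t > 0`, so it is run with `t + δ` and
`δ → 0`, which also covers `σ_m = 0`.
-/

open MeasureTheory Real

open Set

lemma le_add_rpow_div_rpow_sub_one {a t m : ℝ} (ha : 0 ≤ a) (ht : 0 < t) (hm : 1 ≤ m) :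
    a ≤ t + a ^ m / t ^ (m - 1) := by
  rcases le_or_gt a t with hat | hta
  · linarith [div_nonneg (rpow_nonneg ha m) (rpow_nonneg ht.le (m - 1))]
  · have h1 : 1 ≤ a / t := (one_le_div ht).2 hta.le
    have h2 : a / t ≤ (a / t) ^ m := by
      simpa using rpow_le_rpow_of_exponent_le h1 hm
    have h3 : a ^ m / t ^ (m - 1) = t * (a / t) ^ m := by
      rw [div_rpow ha ht.le, rpow_sub_one ht.ne']
      field_simp
    have h4 : a = t * (a / t) := by field_simp
    nlinarith

lemma max_min_eq_add_sub {α β : ℝ} (hαβ : α ≤ β) (x : ℝ) :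
    max α (min x β) = x + max (α - x) 0 - max (x - β) 0 := by
  rcases le_total x α with h | h <;> rcases le_total x β with h' | h' <;>
    simp only [max_def, min_def] <;> split_ifs <;> linarith

section

variable {Ω : Type*} [MeasurableSpace Ω] {P : Measure Ω} {X : Ω → ℝ}

lemma measure_lt_le_of_forall_lt {a : ℝ} {p : ENNReal} (h : ∀ z < a, P {ω | X ω ≤ z} ≤ p) :
    P {ω | X ω < a} ≤ p := by
  obtain ⟨u, hu_mono, hu_lt, hu_lim⟩ := exists_seq_strictMono_tendsto a
  have hunion : {ω | X ω < a} = ⋃ n, {ω | X ω ≤ u n} := by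
    simp_rw [← mem_Iio, ← iUnion_Iic_eq_Iio_of_lt_of_tendsto hu_lt hu_lim]
    ext ω
    simp
  have hmono : Monotone fun n => {ω | X ω ≤ u n} := fun i j hij ω hω =>
    le_trans hω (hu_mono.monotone hij)
  rw [hunion, hmono.measure_iUnion]
  exact iSup_le fun n => h _ (hu_lt n)

lemma measure_gt_le_of_forall_gt {a : ℝ} {p : ENNReal} (h : ∀ z > a, P {ω | z ≤ X ω} ≤ p) :
    P {ω | a < X ω} ≤ p := by
  have := measure_lt_le_of_forall_lt (P := P) (X := -X) (a := -a) fun z hz => by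
    simpa [neg_le] using h (-z) (lt_neg_of_lt_neg hz)
  simpa [neg_lt_neg_iff] using this

lemma measureReal_le_abs_le_integral_rpow_div [IsFiniteMeasure P] {m s : ℝ} (hm : 0 < m)
    (hs : 0 < s) (hXm : Integrable (fun ω => |X ω| ^ m) P) :
    P.real {ω | s ≤ |X ω|} ≤ (∫ ω, |X ω| ^ m ∂P) / s ^ m := by
  have hsm : 0 < s ^ m := rpow_pos_of_pos hs m
  rw [le_div_iff₀ hsm, mul_comm]
  calc s ^ m * P.real {ω | s ≤ |X ω|}
      ≤ s ^ m * P.real {ω | s ^ m ≤ |X ω| ^ m} :=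
        mul_le_mul_of_nonneg_left
          (measureReal_mono fun ω (hω : s ≤ |X ω|) => rpow_le_rpow hs.le hω hm.le) hsm.le
    _ ≤ ∫ ω, |X ω| ^ m ∂P :=
        mul_meas_ge_le_integral_of_nonneg (ae_of_all _ fun ω => by positivity) hXm _

lemma probReal_lt_eq_one_sub [IsProbabilityMeasure P] (hX : AEMeasurable X P) (z : ℝ) :
    P.real {ω | z < X ω} = 1 - P.real {ω | X ω ≤ z} := by
  rw [← probReal_compl_eq_one_sub₀ (nullMeasurableSet_le hX aemeasurable_const)]
  congr 1
  ext ω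
  simp

lemma integral_max_const_sub_zero_le [IsFiniteMeasure P] {c μ t m : ℝ} (hX : Integrable X P)
    (hXm : Integrable (fun ω => |X ω - μ| ^ m) P) (hm : 1 ≤ m) (ht : 0 < t) (hc : c ≤ μ + t) :
    ∫ ω, max (c - X ω) 0 ∂P ≤
      2 * t * P.real {ω | X ω < c} + (∫ ω, |X ω - μ| ^ m ∂P) / t ^ (m - 1) := by
  set A := {ω | X ω < c}
  have hA : NullMeasurableSet A P := nullMeasurableSet_lt hX.aemeasurable aemeasurable_const
  have hpt : ∀ ω,
      max (c - X ω) 0 ≤ A.indicator (fun _ => 2 * t) ω + |X ω - μ| ^ m / t ^ (m - 1) := by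
    intro ω
    have hrem : 0 ≤ |X ω - μ| ^ m / t ^ (m - 1) := by positivity
    by_cases h : X ω < c
    · have := le_add_rpow_div_rpow_sub_one (abs_nonneg (X ω - μ)) ht hm
      rw [indicator_of_mem (show ω ∈ A from h), max_le_iff]
      constructor <;> linarith [neg_abs_le (X ω - μ)]
    · rw [indicator_of_notMem (show ω ∉ A from h), max_eq_right (by linarith [not_lt.1 h])]
      linarith
  calc ∫ ω, max (c - X ω) 0 ∂P
      ≤ ∫ ω, (A.indicator (fun _ => 2 * t) ω + |X ω - μ| ^ m / t ^ (m - 1)) ∂P :=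
        integral_mono ((integrable_const c).sub hX).pos_part
          (((integrable_const _).indicator₀ hA).add (hXm.div_const _)) hpt
    _ = 2 * t * P.real A + (∫ ω, |X ω - μ| ^ m ∂P) / t ^ (m - 1) := by
        rw [integral_add ((integrable_const _).indicator₀ hA) (hXm.div_const _),
          integral_indicator₀ hA, setIntegral_const, integral_div, smul_eq_mul, mul_comm]

lemma integral_max_sub_const_zero_le [IsFiniteMeasure P] {c μ t m : ℝ} (hX : Integrable X P)
    (hXm : Integrable (fun ω => |X ω - μ| ^ m) P) (hm : 1 ≤ m) (ht : 0 < t) (hc : μ - t ≤ c) :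
    ∫ ω, max (X ω - c) 0 ∂P ≤
      2 * t * P.real {ω | c < X ω} + (∫ ω, |X ω - μ| ^ m ∂P) / t ^ (m - 1) := by
  have hXm' : Integrable (fun ω => |-X ω - -μ| ^ m) P := by
    simpa only [neg_sub_neg, abs_sub_comm μ] using hXm
  have := integral_max_const_sub_zero_le (X := -X) (c := -c) hX.neg hXm' hm ht (by linarith)
  simpa only [Pi.neg_apply, neg_sub_neg, neg_lt_neg_iff, abs_sub_comm μ] using this

lemma abs_integral_clamp_sub_le [IsProbabilityMeasure P] {μ m ε t α β : ℝ}
    (hX : Integrable X P) (hmean : ∫ ω, X ω ∂P = μ)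
    (hXm : Integrable (fun ω => |X ω - μ| ^ m) P) (hm : 1 ≤ m) (ht : 0 < t)
    (hmom : ∫ ω, |X ω - μ| ^ m ∂P ≤ ε * t ^ m) (hαβ : α ≤ β) (hα : α ≤ μ + t)
    (hβ : μ - t ≤ β) (hPα : P.real {ω | X ω < α} ≤ ε) (hPβ : P.real {ω | β < X ω} ≤ ε) :
    |(∫ ω, max α (min (X ω) β) ∂P) - μ| ≤ 3 * ε * t := by
  have hrem : (∫ ω, |X ω - μ| ^ m ∂P) / t ^ (m - 1) ≤ ε * t := by
    rw [div_le_iff₀ (rpow_pos_of_pos ht _), rpow_sub_one ht.ne']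
    calc _ ≤ ε * t ^ m := hmom
      _ = ε * t * (t ^ m / t) := by field_simp
  have hlow := integral_max_const_sub_zero_le hX hXm hm ht hα
  have hup := integral_max_sub_const_zero_le hX hXm hm ht hβ
  have hlow_int : Integrable (fun ω => max (α - X ω) 0) P :=
    ((integrable_const α).sub hX).pos_part
  have hup_int : Integrable (fun ω => max (X ω - β) 0) P := (hX.sub (integrable_const β)).pos_part
  have hsplit : ∫ ω, max α (min (X ω) β) ∂P =
      μ + ∫ ω, max (α - X ω) 0 ∂P - ∫ ω, max (X ω - β) 0 ∂P := by
    simp_rw [max_min_eq_add_sub hαβ]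
    have hsum_int : Integrable (fun ω => X ω + max (α - X ω) 0) P := hX.add hlow_int
    rw [integral_sub hsum_int hup_int, integral_add hX hlow_int, hmean]
  rw [hsplit, add_sub_assoc, add_sub_cancel_left]
  refine abs_sub_le_of_nonneg_of_le (integral_nonneg fun _ => le_max_right _ _) ?_
    (integral_nonneg fun _ => le_max_right _ _) ?_ <;> nlinarith

lemma measureReal_lt_sInf_le [IsFiniteMeasure P] {p : ℝ} (hp : 0 ≤ p)
    (hbdd : BddBelow {z | p ≤ P.real {ω | X ω ≤ z}}) :
    P.real {ω | X ω < sInf {z | p ≤ P.real {ω | X ω ≤ z}}} ≤ p := by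
  refine ENNReal.toReal_le_of_le_ofReal hp (measure_lt_le_of_forall_lt fun z hz => ?_)
  have hz : z ∉ {z | p ≤ P.real {ω | X ω ≤ z}} := notMem_of_lt_csInf hz hbdd
  exact (ENNReal.le_ofReal_iff_toReal_le (measure_ne_top _ _) hp).2 (not_le.1 hz).le

lemma measureReal_sInf_lt_le [IsProbabilityMeasure P] (hX : AEMeasurable X P) {p : ℝ}
    (hne : {z | p ≤ P.real {ω | X ω ≤ z}}.Nonempty) :
    P.real {ω | sInf {z | p ≤ P.real {ω | X ω ≤ z}} < X ω} ≤ 1 - p := by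
  obtain ⟨z₀, hz₀⟩ := hne
  have hp : 0 ≤ 1 - p := sub_nonneg.2 (hz₀.trans measureReal_le_one)
  refine ENNReal.toReal_le_of_le_ofReal hp (measure_gt_le_of_forall_gt fun z hz => ?_)
  obtain ⟨s, hs, hsz⟩ := exists_lt_of_csInf_lt ⟨z₀, hz₀⟩ hz
  rw [ENNReal.le_ofReal_iff_toReal_le (measure_ne_top _ _) hp]
  calc P.real {ω | z ≤ X ω} ≤ P.real {ω | s < X ω} :=
        measureReal_mono fun ω (h : z ≤ X ω) => hsz.trans_le h
    _ = 1 - P.real {ω | X ω ≤ s} := probReal_lt_eq_one_sub hX s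
    _ ≤ 1 - p := sub_le_sub_left hs 1

lemma measureReal_le_lt_of_lt_sub [IsFiniteMeasure P] {μ m ε t z : ℝ}
    (hXm : Integrable (fun ω => |X ω - μ| ^ m) P) (hm : 0 < m) (ht : 0 < t)
    (hmom : ∫ ω, |X ω - μ| ^ m ∂P ≤ ε * t ^ m) (hε : 0 < ε) (hz : z < μ - t) :
    P.real {ω | X ω ≤ z} < ε := by
  have hμz : 0 < μ - z := by linarith
  calc P.real {ω | X ω ≤ z} ≤ P.real {ω | μ - z ≤ |X ω - μ|} :=
        measureReal_mono fun ω (h : X ω ≤ z) => by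
          show μ - z ≤ |X ω - μ|
          linarith [neg_abs_le (X ω - μ)]
    _ ≤ (∫ ω, |X ω - μ| ^ m ∂P) / (μ - z) ^ m :=
        measureReal_le_abs_le_integral_rpow_div (X := fun ω => X ω - μ) hm hμz hXm
    _ ≤ ε * t ^ m / (μ - z) ^ m := by gcongr
    _ < ε := by
        rw [div_lt_iff₀ (rpow_pos_of_pos hμz m)]
        exact mul_lt_mul_of_pos_left (rpow_lt_rpow ht.le (by linarith) hm) hε

lemma one_sub_le_measureReal_le_add [IsProbabilityMeasure P] {μ m ε t : ℝ}
    (hX : AEMeasurable X P) (hXm : Integrable (fun ω => |X ω - μ| ^ m) P) (hm : 0 < m)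
    (ht : 0 < t) (hmom : ∫ ω, |X ω - μ| ^ m ∂P ≤ ε * t ^ m) :
    1 - ε ≤ P.real {ω | X ω ≤ μ + t} := by
  have htail : P.real {ω | μ + t < X ω} ≤ ε :=
    calc P.real {ω | μ + t < X ω} ≤ P.real {ω | t ≤ |X ω - μ|} :=
          measureReal_mono fun ω (h : μ + t < X ω) => by
            show t ≤ |X ω - μ|
            linarith [le_abs_self (X ω - μ)]
      _ ≤ (∫ ω, |X ω - μ| ^ m ∂P) / t ^ m :=
          measureReal_le_abs_le_integral_rpow_div (X := fun ω => X ω - μ) hm ht hXm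
      _ ≤ ε := by rwa [div_le_iff₀ (rpow_pos_of_pos ht m)]
  linarith [probReal_lt_eq_one_sub hX (μ + t)]

lemma abs_integral_clamp_quantile_sub_le [IsProbabilityMeasure P] {μ m ε t α β : ℝ}
    (hX : Integrable X P) (hmean : ∫ ω, X ω ∂P = μ)
    (hXm : Integrable (fun ω => |X ω - μ| ^ m) P) (hm : 1 ≤ m) (ht : 0 < t)
    (hmom : ∫ ω, |X ω - μ| ^ m ∂P ≤ ε * t ^ m) (hε0 : 0 < ε) (hε1 : ε ≤ 1 / 2)
    (hα : α = sInf {z | ε ≤ P.real {ω | X ω ≤ z}})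
    (hβ : β = sInf {z | 1 - ε ≤ P.real {ω | X ω ≤ z}}) :
    |(∫ ω, max α (min (X ω) β) ∂P) - μ| ≤ 3 * ε * t := by
  set S := {z | ε ≤ P.real {ω | X ω ≤ z}}
  set S' := {z | 1 - ε ≤ P.real {ω | X ω ≤ z}}
  have hm0 : 0 < m := by linarith
  have hlow : ∀ z ∈ S, μ - t ≤ z := fun z hz =>
    not_lt.1 fun h => (measureReal_le_lt_of_lt_sub hXm hm0 ht hmom hε0 h).not_ge hz
  have hup : μ + t ∈ S' := one_sub_le_measureReal_le_add hX.aemeasurable hXm hm0 ht hmom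
  have hS'S : S' ⊆ S := fun z (hz : 1 - ε ≤ _) => show ε ≤ _ by linarith
  have hbdd : BddBelow S := ⟨μ - t, hlow⟩
  refine abs_integral_clamp_sub_le hX hmean hXm hm ht hmom ?_ ?_ ?_ ?_ ?_
  · rw [hα, hβ]
    exact csInf_le_csInf hbdd ⟨_, hup⟩ hS'S
  · rw [hα]
    exact csInf_le hbdd (hS'S hup)
  · rw [hβ]
    exact le_csInf ⟨_, hup⟩ fun z hz => hlow z (hS'S hz)
  · rw [hα]
    exact measureReal_lt_sInf_le hε0.le hbdd
  · rw [hβ]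
    have := measureReal_sInf_lt_le hX.aemeasurable ⟨_, hup⟩
    rwa [sub_sub_cancel] at this

end

theorem stmt_4 {Ω : Type*} [MeasurableSpace Ω] (P : Measure Ω) [IsProbabilityMeasure P]
    (X : Ω → ℝ) (μ m σm ε : ℝ) (hm : 2 ≤ m) (hσ : 0 ≤ σm)
    (hX : Integrable X P) (hmean : ∫ ω, X ω ∂P = μ)
    (hmomInt : Integrable (fun ω => |X ω - μ| ^ m) P)
    (hmom : ∫ ω, |X ω - μ| ^ m ∂P = σm ^ m)
    (hε0 : 0 < ε) (hε1 : ε < 1 / 2)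
    (α β : ℝ)
    (hα : α = sInf {z : ℝ | ε ≤ (P {ω | X ω ≤ z}).toReal})
    (hβ : β = sInf {z : ℝ | 1 - ε ≤ (P {ω | X ω ≤ z}).toReal}) :
    |(∫ ω, max α (min (X ω) β) ∂P) - μ| ≤ 4 * σm * ε ^ (1 - 1 / m) := by
  set t₀ := σm * ε ^ (-(1 / m))
  have ht₀ : 0 ≤ t₀ := mul_nonneg hσ (rpow_nonneg hε0.le _)
  have hmom₀ : ε * t₀ ^ m = σm ^ m := by
    rw [mul_rpow hσ (rpow_nonneg hε0.le _), ← rpow_mul hε0.le,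
      show -(1 / m) * m = -1 by field_simp, rpow_neg_one]
    field_simp
  have hεt₀ : ε * t₀ = σm * ε ^ (1 - 1 / m) := by
    rw [show 1 - 1 / m = 1 + -(1 / m) by ring, rpow_add hε0, rpow_one]
    ring
  have hbound : ∀ δ > 0, |(∫ ω, max α (min (X ω) β) ∂P) - μ| ≤ 3 * ε * (t₀ + δ) := by
    intro δ hδ
    refine abs_integral_clamp_quantile_sub_le hX hmean hmomInt (by linarith)
      (by positivity) ?_ hε0 hε1.le hα hβ
    rw [hmom, ← hmom₀]
    gcongr
    linarith
  have hsharp : |(∫ ω, max α (min (X ω) β) ∂P) - μ| ≤ 3 * (ε * t₀) := by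
    refine le_of_forall_pos_lt_add fun η hη => (hbound (η / (6 * ε)) (by positivity)).trans_lt ?_
    field_simp
    linarith
  rw [hεt₀] at hsharp
  linarith [mul_nonneg hσ (rpow_nonneg hε0.le (1 - 1 / m))]
end

section
/- Let X be a real random variable with mean μ and E|X - μ|^m = σ_m^m < ∞ for m > 2. Let 0 < ε < 1/2, α = Q_ε(X), β = Q_{1-ε}(X). Then E[(α - X)² · 1{X < α}] ≤ (E|μ - X + σ_m/(1-ε)^{1/m}|^m)^{2/m} · ε^{1-2/m}, where Q_p denotes the p-quantile. -/
/-!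
With `c = σ_m / (1 - ε)^(1/m)`, Markov's inequality for `|X - μ|^m` gives
`P(X > μ + t) < 1 - ε` for every `t > c`, so the `ε`-quantile satisfies `α ≤ μ + c`.
On `{X < α}` we then have `0 ≤ α - X ≤ μ - X + c`, and Hölder's inequality with exponents
`m/2` and `m/(m-2)` on this set, whose probability is at most `ε` by left-continuity of the
distribution function, gives the bound.
-/

open MeasureTheory ProbabilityTheory Real Set Filter

section Quantile

variable {ε : ℝ}

theorem bddBelow_setOf_le_cdf (ν : Measure ℝ) (hε : 0 < ε) : BddBelow {z | ε ≤ cdf ν z} := by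
  obtain ⟨b, hb⟩ := ((tendsto_cdf_atBot ν).eventually (gt_mem_nhds hε)).exists_forall_of_atBot
  exact ⟨b, fun z hz => not_lt.1 fun hzb => (hb z hzb.le).not_ge hz⟩

theorem measure_Iio_sInf_setOf_le_cdf_le (ν : Measure ℝ) [IsProbabilityMeasure ν] (hε : 0 < ε) :
    ν (Iio (sInf {z | ε ≤ cdf ν z})) ≤ ENNReal.ofReal ε := by
  have h := (cdf ν).measure_Iio (tendsto_cdf_atBot ν) (sInf {z | ε ≤ cdf ν z})
  rw [measure_cdf, sub_zero] at h
  rw [h, (cdf ν).mono.leftLim_eq_sSup]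
  refine ENNReal.ofReal_le_ofReal (csSup_le (nonempty_Iio.image _) ?_)
  rintro _ ⟨z, hz, rfl⟩
  have hzS : z ∉ {z | ε ≤ cdf ν z} := notMem_of_lt_csInf hz (bddBelow_setOf_le_cdf ν hε)
  exact (not_le.1 hzS).le

variable {Ω : Type*} [MeasurableSpace Ω] {P : Measure Ω} [IsProbabilityMeasure P] {X : Ω → ℝ}

theorem cdf_map_eq_measureReal (hX : AEMeasurable X P) (z : ℝ) :
    cdf (P.map X) z = P.real {ω | X ω ≤ z} := by
  have := Measure.isProbabilityMeasure_map hX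
  rw [cdf_eq_real, measureReal_def, Measure.map_apply_of_aemeasurable hX measurableSet_Iic]
  rfl

theorem setOf_le_measureReal_eq_setOf_le_cdf (hX : AEMeasurable X P) :
    {z | ε ≤ P.real {ω | X ω ≤ z}} = {z | ε ≤ cdf (P.map X) z} := by
  simp_rw [cdf_map_eq_measureReal hX]

theorem measureReal_lt_sInf_le_s5 (hX : AEMeasurable X P) (hε : 0 < ε) :
    P.real {ω | X ω < sInf {z | ε ≤ P.real {ω | X ω ≤ z}}} ≤ ε := by
  have := Measure.isProbabilityMeasure_map hX
  rw [setOf_le_measureReal_eq_setOf_le_cdf hX]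
  have h := measure_Iio_sInf_setOf_le_cdf_le (P.map X) hε
  rw [Measure.map_apply_of_aemeasurable hX measurableSet_Iio] at h
  exact ENNReal.toReal_le_of_le_ofReal hε.le h

theorem sInf_setOf_le_measureReal_le (hX : AEMeasurable X P) (hε : 0 < ε) {a : ℝ}
    (h : ∀ z, a < z → ε ≤ P.real {ω | X ω ≤ z}) : sInf {z | ε ≤ P.real {ω | X ω ≤ z}} ≤ a := by
  rw [setOf_le_measureReal_eq_setOf_le_cdf hX]
  refine le_of_forall_gt_imp_ge_of_dense fun z hz => csInf_le (bddBelow_setOf_le_cdf _ hε) ?_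
  simpa only [mem_ofPred, cdf_map_eq_measureReal hX] using h z hz

end Quantile

theorem setIntegral_rpow_abs_le {Ω : Type*} [MeasurableSpace Ω] {P : Measure Ω}
    [IsFiniteMeasure P] {Y : Ω → ℝ} {p q : ℝ} (hq : 0 < q) (hqp : q < p)
    (hY : MemLp Y (ENNReal.ofReal p) P) (s : Set Ω) :
    ∫ ω in s, |Y ω| ^ q ∂P ≤ (∫ ω, |Y ω| ^ p ∂P) ^ (q / p) * P.real s ^ (1 - q / p) := by
  have hp : 0 < p := hq.trans hqp
  have hpq := Real.HolderConjugate.inv_one_sub_inv (div_pos hq hp) ((div_lt_one hp).2 hqp)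
  have hf : MemLp (fun ω => ‖Y ω‖ ^ q) (ENNReal.ofReal (q / p)⁻¹) (P.restrict s) := by
    have := (hY.norm_rpow_div (ENNReal.ofReal q)).restrict s
    rwa [ENNReal.toReal_ofReal hq.le, ← ENNReal.ofReal_div_of_pos hq, ← inv_div] at this
  have hpow : ∀ ω, ‖‖Y ω‖ ^ q‖ ^ (q / p)⁻¹ = |Y ω| ^ p := fun ω => by
    rw [norm_of_nonneg (by positivity), ← rpow_mul (norm_nonneg _), inv_div,
      mul_div_cancel₀ _ hq.ne', norm_eq_abs]
  calc ∫ ω in s, |Y ω| ^ q ∂P = ∫ ω in s, ‖‖Y ω‖ ^ q‖ * ‖(1 : ℝ)‖ ∂P := by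
        simp only [norm_one, mul_one, norm_of_nonneg (rpow_nonneg (abs_nonneg _) _), norm_eq_abs]
    _ ≤ (∫ ω in s, ‖‖Y ω‖ ^ q‖ ^ (q / p)⁻¹ ∂P) ^ (1 / (q / p)⁻¹) *
          (∫ _ in s, ‖(1 : ℝ)‖ ^ (1 - q / p)⁻¹ ∂P) ^ (1 / (1 - q / p)⁻¹) :=
        integral_mul_norm_le_Lp_mul_Lq hpq hf (memLp_const 1)
    _ = (∫ ω in s, |Y ω| ^ p ∂P) ^ (q / p) * P.real s ^ (1 - q / p) := by
        simp only [hpow, norm_one, one_rpow, integral_const, smul_eq_mul, mul_one,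
          measureReal_restrict_apply_univ, one_div, inv_inv]
    _ ≤ (∫ ω, |Y ω| ^ p ∂P) ^ (q / p) * P.real s ^ (1 - q / p) := by
        have hint : Integrable (fun ω => |Y ω| ^ p) P := by
          simpa [ENNReal.toReal_ofReal hp.le] using hY.integrable_norm_rpow'
        gcongr ?_ ^ _ * _
        exact setIntegral_le_integral hint (Eventually.of_forall fun ω => by positivity)

section MomentBound

variable {Ω : Type*} [MeasurableSpace Ω] {P : Measure Ω} [IsProbabilityMeasure P] {X : Ω → ℝ}

theorem memLp_of_integrable_abs_sub_rpow (hX : AEStronglyMeasurable X P) {μ m : ℝ} (hm : 0 < m)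
    (hint : Integrable (fun ω => |X ω - μ| ^ m) P) : MemLp X (ENNReal.ofReal m) P := by
  have hXμ : MemLp (fun ω => X ω - μ) (ENNReal.ofReal m) P :=
    (integrable_norm_rpow_iff (hX.sub aestronglyMeasurable_const) (by simpa using hm)
      ENNReal.ofReal_ne_top).1 (by simpa [ENNReal.toReal_ofReal hm.le] using hint)
  simpa [Pi.add_def] using hXμ.add (memLp_const μ)

theorem one_sub_integral_div_rpow_le_measureReal_le_add (hX : AEMeasurable X P) {μ m t : ℝ}
    (hm : 0 < m) (ht : 0 < t) (hint : Integrable (fun ω => |X ω - μ| ^ m) P) :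
    1 - (∫ ω, |X ω - μ| ^ m ∂P) / t ^ m ≤ P.real {ω | X ω ≤ μ + t} := by
  have htm : 0 < t ^ m := rpow_pos_of_pos ht m
  have hmarkov := mul_meas_ge_le_integral_of_nonneg
    (Eventually.of_forall fun ω => by positivity) hint (t ^ m)
  have htail : {ω | X ω ≤ μ + t}ᶜ ⊆ {ω | t ^ m ≤ |X ω - μ| ^ m} := fun ω hω => by
    have hlt : μ + t < X ω := not_le.1 hω
    exact rpow_le_rpow ht.le (by rw [abs_of_pos (by linarith)]; linarith) hm.le
  have hcompl : P.real {ω | X ω ≤ μ + t}ᶜ = 1 - P.real {ω | X ω ≤ μ + t} :=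
    probReal_compl_eq_one_sub₀ (hX.nullMeasurable measurableSet_Iic)
  have := (le_div_iff₀' htm).2 hmarkov
  linarith [measureReal_mono (μ := P) htail]

theorem sInf_setOf_le_measureReal_le_add_of_moment (hX : AEMeasurable X P) {μ m σ ε : ℝ}
    (hm : 0 < m) (hσ : 0 ≤ σ) (hε0 : 0 < ε) (hε1 : ε < 1)
    (hint : Integrable (fun ω => |X ω - μ| ^ m) P) (hmom : ∫ ω, |X ω - μ| ^ m ∂P = σ ^ m) :
    sInf {z | ε ≤ P.real {ω | X ω ≤ z}} ≤ μ + σ / (1 - ε) ^ (1 / m) := by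
  set c := σ / (1 - ε) ^ (1 / m)
  have hc0 : 0 ≤ c := by positivity
  have hcm : σ ^ m = (1 - ε) * c ^ m := by
    rw [div_rpow hσ (by positivity), ← rpow_mul (by linarith), one_div_mul_cancel hm.ne',
      rpow_one, mul_div_cancel₀ _ (by linarith)]
  refine sInf_setOf_le_measureReal_le hX hε0 fun z hz => ?_
  have hct : c < z - μ := by linarith
  have htm : 0 < (z - μ) ^ m := rpow_pos_of_pos (hc0.trans_lt hct) m
  calc ε ≤ 1 - σ ^ m / (z - μ) ^ m := by
        rw [le_sub_comm, div_le_iff₀ htm, hcm]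
        gcongr
    _ ≤ P.real {ω | X ω ≤ z} := by
        simpa [hmom] using one_sub_integral_div_rpow_le_measureReal_le_add hX (μ := μ) hm
          (hc0.trans_lt hct) hint

end MomentBound

theorem stmt_5_general {Ω : Type*} [MeasurableSpace Ω] (P : Measure Ω) [IsProbabilityMeasure P]
    (X : Ω → ℝ) (μ m σm ε : ℝ) (hm : 2 < m) (hσ : 0 ≤ σm)
    (hX : Integrable X P)
    (hmomInt : Integrable (fun ω => |X ω - μ| ^ m) P)
    (hmom : ∫ ω, |X ω - μ| ^ m ∂P = σm ^ m)
    (hε0 : 0 < ε) (hε1 : ε < 1 / 2)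
    (α : ℝ) (hα : α = sInf {z : ℝ | ε ≤ (P {ω | X ω ≤ z}).toReal}) :
    ∫ ω, Set.indicator {ω | X ω < α} (fun ω => (α - X ω) ^ 2) ω ∂P ≤
      (∫ ω, |μ - X ω + σm / (1 - ε) ^ (1 / m)| ^ m ∂P) ^ (2 / m) * ε ^ (1 - 2 / m) := by
  set c := σm / (1 - ε) ^ (1 / m)
  have hm0 : 0 < m := by linarith
  have hαc : α ≤ μ + c :=
    hα ▸ sInf_setOf_le_measureReal_le_add_of_moment hX.aemeasurable hm0 hσ hε0 (by linarith)
      hmomInt hmom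
  have hA : P.real {ω | X ω < α} ≤ ε := hα ▸ measureReal_lt_sInf_le_s5 hX.aemeasurable hε0
  have hY : MemLp (fun ω => μ - X ω + c) (ENNReal.ofReal m) P :=
    ((memLp_const μ).sub (memLp_of_integrable_abs_sub_rpow hX.1 hm0 hmomInt)).add (memLp_const c)
  have hY2 : Integrable (fun ω => |μ - X ω + c| ^ (2 : ℝ)) P := by
    simpa using integrable_norm_rpow_of_le hY.1 zero_le_two hm0.le hm.le
      (by simpa [ENNReal.toReal_ofReal hm0.le] using hY.integrable_norm_rpow')
  have hAnm : NullMeasurableSet {ω | X ω < α} P := hX.aemeasurable.nullMeasurable measurableSet_Iio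
  calc ∫ ω, Set.indicator {ω | X ω < α} (fun ω => (α - X ω) ^ 2) ω ∂P
        = ∫ ω in {ω | X ω < α}, (α - X ω) ^ 2 ∂P := integral_indicator₀ hAnm
    _ ≤ ∫ ω in {ω | X ω < α}, |μ - X ω + c| ^ (2 : ℝ) ∂P := by
        refine integral_mono_of_nonneg (Eventually.of_forall fun ω => sq_nonneg _)
          hY2.integrableOn ?_
        filter_upwards [ae_restrict_mem₀ hAnm] with ω hω
        have hXα : X ω < α := hω
        rw [rpow_two, sq_abs]
        exact pow_le_pow_left₀ (by linarith) (by linarith) 2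
    _ ≤ (∫ ω, |μ - X ω + c| ^ m ∂P) ^ (2 / m) * P.real {ω | X ω < α} ^ (1 - 2 / m) :=
        setIntegral_rpow_abs_le two_pos hm hY _
    _ ≤ (∫ ω, |μ - X ω + c| ^ m ∂P) ^ (2 / m) * ε ^ (1 - 2 / m) := by
        gcongr
        rw [sub_nonneg, div_le_one hm0]
        exact hm.le

theorem stmt_5 {Ω : Type*} [MeasurableSpace Ω] (P : Measure Ω) [IsProbabilityMeasure P]
    (X : Ω → ℝ) (μ m σm ε : ℝ) (hm : 2 < m) (hσ : 0 ≤ σm)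
    (hX : Integrable X P) (hmean : ∫ ω, X ω ∂P = μ)
    (hmomInt : Integrable (fun ω => |X ω - μ| ^ m) P)
    (hmom : ∫ ω, |X ω - μ| ^ m ∂P = σm ^ m)
    (hε0 : 0 < ε) (hε1 : ε < 1 / 2)
    (α : ℝ) (hα : α = sInf {z : ℝ | ε ≤ (P {ω | X ω ≤ z}).toReal}) :
    ∫ ω, Set.indicator {ω | X ω < α} (fun ω => (α - X ω) ^ 2) ω ∂P ≤
      (∫ ω, |μ - X ω + σm / (1 - ε) ^ (1 / m)| ^ m ∂P) ^ (2 / m) * ε ^ (1 - 2 / m) :=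
  stmt_5_general P X μ m σm ε hm hσ hX hmomInt hmom hε0 hε1 α hα
end
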